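/- arXiv:1410.3037 — 8 statements merged into one kernel-verified Lean document; each statement's English description precedes it below -/
import Mathlib

section
/- For integers m ≥ 2 and real p with m < p, the supremum of |z₁⋯z_m| over the unit ball of ℓ_p^m(ℂ) is at most the supremum of |z₁⋯z_{m-1}| over the unit ball of ℓ_p^{m-1}(ℂ); that is, ‖P_m‖ ≤ ‖P_{m-1}‖. -/
lemma aux_le_one {p x : ℝ} (hp : 0 < p) (hx : 0 ≤ x) (hxp : x ^ p ≤ 1) : x ≤ 1 := by
  by_contra h
  push_neg at h
  have h2 : 1 < x ^ p := Real.one_lt_rpow_iff_of_pos (lt_trans one_pos h) |>.2 (Or.inl ⟨h, hp⟩)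
  linarith

theorem stmt_4 (m : ℕ) (hm : 2 ≤ m) (p : ℝ) (hp : (m : ℝ) < p) :
    sSup {y : ℝ | ∃ z : Fin m → ℂ, (∑ i, ‖z i‖ ^ p) ≤ 1 ∧ y = ‖∏ i, z i‖} ≤
    sSup {y : ℝ | ∃ z : Fin (m - 1) → ℂ, (∑ i, ‖z i‖ ^ p) ≤ 1 ∧ y = ‖∏ i, z i‖} := by
  have hp0 : 0 < p := lt_of_le_of_lt (by positivity) hp
  obtain ⟨n, rfl⟩ : ∃ n, m = n + 1 := ⟨m - 1, (Nat.succ_pred_eq_of_pos (by omega)).symm⟩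
  have hn : n ≠ 0 := by omega
  set S : Set ℝ := {y : ℝ | ∃ z : Fin n → ℂ, (∑ i, ‖z i‖ ^ p) ≤ 1 ∧ y = ‖∏ i, z i‖} with hS
  have hbdd : BddAbove S := by
    refine ⟨1, fun y hy => ?_⟩
    obtain ⟨z, hz, rfl⟩ := hy
    rw [norm_prod]
    refine Finset.prod_le_one (fun i _ => norm_nonneg _) (fun i _ => ?_)
    refine aux_le_one hp0 (norm_nonneg _) (le_trans ?_ hz)
    exact Finset.single_le_sum (fun j _ => Real.rpow_nonneg (norm_nonneg _) p)
      (Finset.mem_univ i)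
  have h0 : (0 : ℝ) ∈ S := by
    refine ⟨0, ?_, ?_⟩
    · simp [Real.zero_rpow hp0.ne']
    · simp [Finset.prod_const, hn]
  apply Real.sSup_le
  · rintro y ⟨z, hz, rfl⟩
    set w : Fin n → ℂ := fun i => z i.castSucc with hw
    have hws : (∑ i, ‖w i‖ ^ p) ≤ 1 := by
      refine le_trans ?_ hz
      rw [Fin.sum_univ_castSucc]
      have : 0 ≤ ‖z (Fin.last n)‖ ^ p := Real.rpow_nonneg (norm_nonneg _) p
      linarith
    have hlast : ‖z (Fin.last n)‖ ≤ 1 := by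
      refine aux_le_one hp0 (norm_nonneg _) (le_trans ?_ hz)
      exact Finset.single_le_sum (fun j _ => Real.rpow_nonneg (norm_nonneg _) p)
        (Finset.mem_univ _)
    have hmem : ‖∏ i, w i‖ ∈ S := ⟨w, hws, rfl⟩
    have h1 : ‖∏ i, z i‖ ≤ ‖∏ i, w i‖ := by
      rw [Fin.prod_univ_castSucc, norm_mul]
      calc ‖∏ i : Fin n, z i.castSucc‖ * ‖z (Fin.last n)‖
          ≤ ‖∏ i : Fin n, z i.castSucc‖ * 1 :=
            mul_le_mul_of_nonneg_left hlast (norm_nonneg _)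
        _ = ‖∏ i, w i‖ := by rw [mul_one]
    exact le_trans h1 (le_csSup hbdd hmem)
  · exact le_csSup hbdd h0
end

section
/- Suppose m ≥ 2 is even, p ≥ 2m, and C ≥ 1 is a constant such that for all n and all complex m-homogeneous polynomials P(x) = Σ_{|α|=m} a_α x^α on ℓ_p^n, one has (Σ_{|α|=m} |a_α|^(2mp/(mp+p-2m)))^((mp+p-2m)/(2mp)) ≤ C·‖P‖, where ‖P‖ is the sup of |P| on the unit ball of ℓ_p^n. Then C ≥ 2^(m/p). -/
lemma key_amgm (k : ℕ) (p : ℝ) (hp : 0 < p) (a b : ℝ) (ha : 0 ≤ a) (hb : 0 ≤ b)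
    (hab : a ^ p + b ^ p ≤ 1) :
    a ^ k * b ^ k ≤ (2 : ℝ) ^ (-(2 * (k : ℝ)) / p) := by
  have hab0 : 0 ≤ a * b := mul_nonneg ha hb
  have h1 : a ^ k * b ^ k = ((a * b) ^ p) ^ ((k : ℝ) / p) := by
    rw [← Real.rpow_natCast a k, ← Real.rpow_natCast b k,
      ← Real.rpow_mul hab0, ← Real.mul_rpow ha hb]
    rw [mul_div_cancel₀ _ (ne_of_gt hp)]
  have h2 : (a * b) ^ p ≤ 1 / 4 := by
    have hs : 0 ≤ a ^ p := Real.rpow_nonneg ha p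
    have ht : 0 ≤ b ^ p := Real.rpow_nonneg hb p
    rw [Real.mul_rpow ha hb]
    nlinarith [sq_nonneg (a ^ p - b ^ p)]
  have h3 : ((a * b) ^ p) ^ ((k : ℝ) / p) ≤ ((1 : ℝ) / 4) ^ ((k : ℝ) / p) :=
    Real.rpow_le_rpow (Real.rpow_nonneg hab0 p) h2
      (div_nonneg (Nat.cast_nonneg k) hp.le)
  have h4 : ((1 : ℝ) / 4) ^ ((k : ℝ) / p) = (2 : ℝ) ^ (-(2 * (k : ℝ)) / p) := by
    have : (1 : ℝ) / 4 = (2 : ℝ) ^ (-2 : ℝ) := by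
      rw [Real.rpow_neg (by norm_num), show ((2:ℝ))^(2:ℝ) = 4 by
        rw [show (2:ℝ) = ((2:ℕ):ℝ) by norm_num, Real.rpow_natCast]; norm_num]
      norm_num
    rw [this, ← Real.rpow_mul (by norm_num)]
    ring_nf
  rw [h1]
  calc ((a * b) ^ p) ^ ((k : ℝ) / p) ≤ ((1 : ℝ) / 4) ^ ((k : ℝ) / p) := h3
    _ = (2 : ℝ) ^ (-(2 * (k : ℝ)) / p) := h4

theorem stmt_5 (m : ℕ) (hm : 2 ≤ m) (hme : Even m) (p : ℝ) (hp : 2 * (m : ℝ) ≤ p)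
    (C : ℝ) (hC : 1 ≤ C)
    (H : ∀ (n : ℕ) (P : MvPolynomial (Fin n) ℂ), P.IsHomogeneous m →
      (∑ α ∈ P.support, ‖P.coeff α‖ ^ (2 * (m : ℝ) * p / ((m : ℝ) * p + p - 2 * (m : ℝ)))) ^
          (((m : ℝ) * p + p - 2 * (m : ℝ)) / (2 * (m : ℝ) * p)) ≤
        C * sSup {y : ℝ | ∃ z : Fin n → ℂ, (∑ i, ‖z i‖ ^ p) ≤ 1 ∧
              y = ‖MvPolynomial.eval z P‖}) :
    (2 : ℝ) ^ ((m : ℝ) / p) ≤ C := by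
  obtain ⟨k, hk⟩ := hme
  have hppos : 0 < p := by
    have : (2 : ℝ) ≤ (m : ℝ) := by exact_mod_cast hm
    linarith
  -- the test polynomial
  set P : MvPolynomial (Fin 2) ℂ :=
    (MvPolynomial.X 0) ^ k * (MvPolynomial.X 1) ^ k with hP
  have hhom : P.IsHomogeneous m := by
    have := ((MvPolynomial.isHomogeneous_X ℂ (0 : Fin 2)).pow k).mul
      ((MvPolynomial.isHomogeneous_X ℂ (1 : Fin 2)).pow k)
    simpa [hk, one_mul] using this
  have hmono : P = MvPolynomial.monomial
      (Finsupp.single (0 : Fin 2) k + Finsupp.single 1 k) (1 : ℂ) := by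
    rw [hP, MvPolynomial.X_pow_eq_monomial, MvPolynomial.X_pow_eq_monomial,
      MvPolynomial.monomial_mul, one_mul]
  have hsum : (∑ α ∈ P.support,
      ‖P.coeff α‖ ^ (2 * (m : ℝ) * p / ((m : ℝ) * p + p - 2 * (m : ℝ)))) = 1 := by
    rw [hmono, MvPolynomial.support_monomial]
    simp [MvPolynomial.coeff_monomial]
  have hS : sSup {y : ℝ | ∃ z : Fin 2 → ℂ, (∑ i, ‖z i‖ ^ p) ≤ 1 ∧
      y = ‖MvPolynomial.eval z P‖} ≤ (2 : ℝ) ^ (-((m : ℝ)) / p) := by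
    apply Real.sSup_le
    · rintro y ⟨z, hz, rfl⟩
      have heval : ‖MvPolynomial.eval z P‖ = ‖z 0‖ ^ k * ‖z 1‖ ^ k := by
        simp [hP, norm_pow]
      rw [heval]
      have hz' : ‖z 0‖ ^ p + ‖z 1‖ ^ p ≤ 1 := by
        have := hz
        rw [Fin.sum_univ_two] at this
        exact this
      have := key_amgm k p hppos ‖z 0‖ ‖z 1‖ (norm_nonneg _) (norm_nonneg _) hz'
      have hcast : -(2 * (k : ℝ)) / p = -((m : ℝ)) / p := by
        have : (m : ℝ) = 2 * (k : ℝ) := by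
          rw [hk]; push_cast; ring
        rw [this]
      rwa [hcast] at this
    · positivity
  have hHP := H 2 P hhom
  rw [hsum, Real.one_rpow] at hHP
  have hCpos : 0 ≤ C := by linarith
  have h1 : (1 : ℝ) ≤ C * (2 : ℝ) ^ (-((m : ℝ)) / p) :=
    hHP.trans (mul_le_mul_of_nonneg_left hS hCpos)
  have ht : (0 : ℝ) < (2 : ℝ) ^ (-((m : ℝ)) / p) := Real.rpow_pos_of_pos (by norm_num) _
  have h2 : (1 : ℝ) / (2 : ℝ) ^ (-((m : ℝ)) / p) ≤ C := by
    rw [div_le_iff₀ ht]; linarith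
  calc (2 : ℝ) ^ ((m : ℝ) / p) = 1 / (2 : ℝ) ^ (-((m : ℝ)) / p) := by
        rw [neg_div, Real.rpow_neg (by norm_num), one_div, inv_inv]
    _ ≤ C := h2
end

section
/- Suppose m ≥ 3 is odd, p ≥ 2m, and C ≥ 1 is a constant such that for all n and all complex m-homogeneous polynomials P(x) = Σ_{|α|=m} a_α x^α on ℓ_p^n, one has (Σ_{|α|=m} |a_α|^(2mp/(mp+p-2m)))^((mp+p-2m)/(2mp)) ≤ C·‖P‖. Then C ≥ 2^((m-1)/p). -/
open Finset

private lemma aux_prod_le (m : ℕ) (hm0 : (0:ℝ) < m) (p : ℝ) (hp0 : (0:ℝ) < p)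
    (z : Fin m → ℂ) (hz : (∑ i, ‖z i‖ ^ p) ≤ 1) :
    ∏ i, ‖z i‖ ≤ ((m:ℝ)⁻¹) ^ ((m:ℝ)/p) := by
  have hprodnn : (0:ℝ) ≤ ∏ i, ‖z i‖ := Finset.prod_nonneg fun i _ => norm_nonneg _
  have hgm : ∏ i, (‖z i‖ ^ p) ^ ((m:ℝ)⁻¹) ≤ (m:ℝ)⁻¹ := by
    calc ∏ i, (‖z i‖ ^ p) ^ ((m:ℝ)⁻¹)
        ≤ ∑ i, (m:ℝ)⁻¹ * (‖z i‖ ^ p) := by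
          apply Real.geom_mean_le_arith_mean_weighted
          · intro i _; positivity
          · simp [Finset.sum_const]
            field_simp
          · intro i _; positivity
      _ = (m:ℝ)⁻¹ * ∑ i, ‖z i‖ ^ p := by rw [Finset.mul_sum]
      _ ≤ (m:ℝ)⁻¹ * 1 := mul_le_mul_of_nonneg_left hz (by positivity)
      _ = (m:ℝ)⁻¹ := mul_one _
  have hrw : ∏ i, (‖z i‖ ^ p) ^ ((m:ℝ)⁻¹) = (∏ i, ‖z i‖) ^ (p * (m:ℝ)⁻¹) := by
    rw [← Real.finset_prod_rpow _ _ (fun i _ => norm_nonneg (z i)) _]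
    apply Finset.prod_congr rfl
    intro i _
    rw [← Real.rpow_mul (norm_nonneg _)]
  rw [hrw] at hgm
  have key : ((∏ i, ‖z i‖) ^ (p * (m:ℝ)⁻¹)) ^ ((m:ℝ)/p) ≤ ((m:ℝ)⁻¹) ^ ((m:ℝ)/p) :=
    Real.rpow_le_rpow (by positivity) hgm (by positivity)
  rwa [← Real.rpow_mul hprodnn, show p * (m:ℝ)⁻¹ * ((m:ℝ)/p) = 1 by field_simp,
    Real.rpow_one] at key

private lemma aux_two_le (m : ℕ) (hm : 3 ≤ m) (p : ℝ) (hp0 : (0:ℝ) < p) :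
    (2:ℝ) ^ (((m:ℝ) - 1)/p) ≤ (m:ℝ) ^ ((m:ℝ)/p) := by
  have hm0 : (0:ℝ) < m := by positivity
  have e1 : (2:ℝ) ^ (((m:ℝ) - 1)/p) = ((2:ℝ) ^ ((m:ℝ) - 1)) ^ (p⁻¹) := by
    rw [← Real.rpow_mul (by norm_num), div_eq_mul_inv]
  have e2 : (m:ℝ) ^ ((m:ℝ)/p) = ((m:ℝ) ^ (m:ℝ)) ^ (p⁻¹) := by
    rw [← Real.rpow_mul hm0.le, div_eq_mul_inv]
  rw [e1, e2]
  apply Real.rpow_le_rpow (by positivity) _ (by positivity)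
  calc (2:ℝ) ^ ((m:ℝ) - 1) ≤ (2:ℝ) ^ (m:ℝ) :=
        Real.rpow_le_rpow_of_exponent_le one_le_two (by linarith)
    _ ≤ (m:ℝ) ^ (m:ℝ) := by
        apply Real.rpow_le_rpow (by norm_num) (by exact_mod_cast by omega) hm0.le

private lemma aux_poly (m : ℕ) :
    (∏ i, MvPolynomial.X i : MvPolynomial (Fin m) ℂ) =
      MvPolynomial.monomial (Finsupp.equivFunOnFinite.symm (fun _ => 1)) 1 := by
  set α : Fin m →₀ ℕ := Finsupp.equivFunOnFinite.symm (fun _ => 1) with hα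
  have hαapp : ∀ i, α i = 1 := fun i => rfl
  have hαsupp : α.support = Finset.univ := by
    ext i; simp [Finsupp.mem_support_iff, hαapp]
  rw [← MvPolynomial.prod_X_pow_eq_monomial, hαsupp]
  simp [hαapp]

theorem stmt_6 (m : ℕ) (hm : 3 ≤ m) (hmo : Odd m) (p : ℝ) (hp : 2 * (m : ℝ) ≤ p)
    (C : ℝ) (hC : 1 ≤ C)
    (H : ∀ (n : ℕ) (P : MvPolynomial (Fin n) ℂ), P.IsHomogeneous m →
      (∑ α ∈ P.support, ‖P.coeff α‖ ^ (2 * (m : ℝ) * p / ((m : ℝ) * p + p - 2 * (m : ℝ)))) ^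
          (((m : ℝ) * p + p - 2 * (m : ℝ)) / (2 * (m : ℝ) * p)) ≤
        C * sSup {y : ℝ | ∃ z : Fin n → ℂ, (∑ i, ‖z i‖ ^ p) ≤ 1 ∧
              y = ‖MvPolynomial.eval z P‖}) :
    (2 : ℝ) ^ (((m : ℝ) - 1) / p) ≤ C := by
  have hm0 : (0:ℝ) < m := by positivity
  have hp0 : (0:ℝ) < p := lt_of_lt_of_le (by linarith) hp
  set P : MvPolynomial (Fin m) ℂ := ∏ i, MvPolynomial.X i with hP
  have hhom : P.IsHomogeneous m := by
    have := MvPolynomial.IsHomogeneous.prod (Finset.univ : Finset (Fin m))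
      (fun i => (MvPolynomial.X i : MvPolynomial (Fin m) ℂ)) (fun _ => 1)
      (fun i _ => MvPolynomial.isHomogeneous_X _ _)
    simpa using this
  have hPmono : P = MvPolynomial.monomial (Finsupp.equivFunOnFinite.symm (fun _ => 1)) 1 :=
    aux_poly m
  have hsupp : P.support = {Finsupp.equivFunOnFinite.symm (fun _ => 1)} := by
    rw [hPmono, MvPolynomial.support_monomial]
    simp
  have hLHS : (∑ β ∈ P.support, ‖P.coeff β‖ ^ (2 * (m : ℝ) * p / ((m : ℝ) * p + p - 2 * (m : ℝ)))) ^
      (((m : ℝ) * p + p - 2 * (m : ℝ)) / (2 * (m : ℝ) * p)) = 1 := by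
    rw [hsupp, Finset.sum_singleton, hPmono]
    simp [MvPolynomial.coeff_monomial, Real.one_rpow]
  set B : ℝ := ((m:ℝ)⁻¹) ^ ((m:ℝ)/p) with hB
  have hB0 : 0 < B := by positivity
  have hsup : sSup {y : ℝ | ∃ z : Fin m → ℂ, (∑ i, ‖z i‖ ^ p) ≤ 1 ∧
      y = ‖MvPolynomial.eval z P‖} ≤ B := by
    apply Real.sSup_le _ hB0.le
    rintro y ⟨z, hz, rfl⟩
    have hev : ‖MvPolynomial.eval z P‖ = ∏ i, ‖z i‖ := by
      simp [hP, norm_prod]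
    rw [hev]
    exact aux_prod_le m hm0 p hp0 z hz
  have h1 : 1 ≤ C * B := by
    have := H m P hhom
    rw [hLHS] at this
    exact this.trans (mul_le_mul_of_nonneg_left hsup (by linarith))
  have hBC : B⁻¹ ≤ C := by
    rw [inv_le_iff_one_le_mul₀ hB0]
    linarith [h1, mul_comm C B]
  have hBinv : B⁻¹ = (m:ℝ) ^ ((m:ℝ)/p) := by
    rw [hB, ← Real.inv_rpow (by positivity), inv_inv]
  refine le_trans ?_ hBC
  rw [hBinv]
  exact aux_two_le m hm p hp0
end

section
/- Suppose m ≥ 2 is even, m < p < 2m, and C ≥ 1 is a constant such that for all n and all complex m-homogeneous polynomials P(x) = Σ_{|α|=m} a_α x^α on ℓ_p^n, one has (Σ_{|α|=m} |a_α|^(p/(p-m)))^((p-m)/p) ≤ C·‖P‖. Then C ≥ 2^(m/p). -/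
theorem stmt_7 (m : ℕ) (hm : 2 ≤ m) (hme : Even m) (p : ℝ)
    (hp1 : (m : ℝ) < p) (hp2 : p < 2 * (m : ℝ)) (C : ℝ) (hC : 1 ≤ C)
    (H : ∀ (n : ℕ) (P : MvPolynomial (Fin n) ℂ), P.IsHomogeneous m →
      (∑ α ∈ P.support, ‖P.coeff α‖ ^ (p / (p - (m : ℝ)))) ^ ((p - (m : ℝ)) / p) ≤
        C * sSup {y : ℝ | ∃ z : Fin n → ℂ, (∑ i, ‖z i‖ ^ p) ≤ 1 ∧
              y = ‖MvPolynomial.eval z P‖}) :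
    (2 : ℝ) ^ ((m : ℝ) / p) ≤ C := by
  have hm0 : 0 < m := by omega
  have hp0 : (0 : ℝ) < p := lt_trans (by exact_mod_cast hm0) hp1
  -- test polynomial
  set P : MvPolynomial (Fin m) ℂ := ∏ i, MvPolynomial.X i with hP
  have hPhom : P.IsHomogeneous m := by
    have := MvPolynomial.IsHomogeneous.prod (Finset.univ : Finset (Fin m))
      (fun i => (MvPolynomial.X i : MvPolynomial (Fin m) ℂ)) (fun _ => 1)
      (fun i _ => MvPolynomial.isHomogeneous_X _ _)
    simpa using this
  have hPmono : P = MvPolynomial.monomial (∑ i, Finsupp.single i 1) (1 : ℂ) := by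
    rw [hP, MvPolynomial.monomial_sum_one]
    exact Finset.prod_congr rfl fun i _ => rfl
  -- sSup bound
  set S : Set ℝ := {y : ℝ | ∃ z : Fin m → ℂ, (∑ i, ‖z i‖ ^ p) ≤ 1 ∧
      y = ‖MvPolynomial.eval z P‖} with hS
  have hSne : S.Nonempty := by
    refine ⟨0, 0, ?_, ?_⟩
    · simp [Real.zero_rpow (ne_of_gt hp0)]
    · rw [hP, MvPolynomial.eval_prod]
      simp [Finset.prod_const, zero_pow hm0.ne']
  have hbound : ∀ y ∈ S, y ≤ (2 : ℝ) ^ (-((m : ℝ) / p)) := by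
    rintro y ⟨z, hz, rfl⟩
    rw [hP]
    rw [MvPolynomial.eval_prod]
    simp only [MvPolynomial.eval_X]
    rw [norm_prod]
    -- AM-GM
    have hx : ∀ i : Fin m, (0:ℝ) ≤ ‖z i‖ ^ p := fun i => Real.rpow_nonneg (norm_nonneg _) _
    have hgm := Real.geom_mean_le_arith_mean_weighted Finset.univ
      (fun _ : Fin m => 1 / (m : ℝ)) (fun i => ‖z i‖ ^ p)
      (fun i _ => by positivity) (by simp; field_simp) (fun i _ => hx i)
    have hsum : ∑ i, (1 / (m : ℝ)) * (‖z i‖ ^ p) ≤ 1 / 2 := by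
      rw [← Finset.mul_sum]
      have hm2 : (2:ℝ) ≤ (m:ℝ) := by exact_mod_cast hm
      calc (1 / (m:ℝ)) * ∑ i, ‖z i‖ ^ p ≤ (1 / (m:ℝ)) * 1 := by
            apply mul_le_mul_of_nonneg_left hz (by positivity)
        _ ≤ 1 / 2 := by rw [mul_one]; apply one_div_le_one_div_of_le (by norm_num) hm2
    have hG : ∏ i : Fin m, (‖z i‖ ^ p) ^ (1 / (m:ℝ)) ≤ 1 / 2 := le_trans hgm hsum
    have hGnn : (0:ℝ) ≤ ∏ i : Fin m, (‖z i‖ ^ p) ^ (1 / (m:ℝ)) :=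
      Finset.prod_nonneg (fun i _ => Real.rpow_nonneg (hx i) _)
    have hprodp : ∏ i : Fin m, ‖z i‖ ^ p ≤ (1 / 2 : ℝ) ^ m := by
      have hpow := pow_le_pow_left₀ hGnn hG m
      have heq : (∏ i : Fin m, (‖z i‖ ^ p) ^ (1 / (m:ℝ))) ^ m = ∏ i : Fin m, ‖z i‖ ^ p := by
        rw [← Finset.prod_pow]
        apply Finset.prod_congr rfl
        intro i _
        rw [← Real.rpow_natCast ((‖z i‖ ^ p) ^ (1 / (m:ℝ))) m, ← Real.rpow_mul (hx i)]
        rw [one_div, inv_mul_cancel₀ (by exact_mod_cast hm0.ne' : (m:ℝ) ≠ 0)]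
        exact Real.rpow_one _
      rw [heq] at hpow
      exact hpow
    -- now take p-th roots
    have hpnn : (0:ℝ) ≤ ∏ i : Fin m, ‖z i‖ ^ p :=
      Finset.prod_nonneg (fun i _ => hx i)
    have key : ∏ i : Fin m, ‖z i‖ = (∏ i : Fin m, ‖z i‖ ^ p) ^ (1 / p) := by
      rw [← Real.finset_prod_rpow _ _ (fun i _ => hx i)]
      apply Finset.prod_congr rfl
      intro i _
      rw [← Real.rpow_mul (norm_nonneg _), mul_one_div, div_self (ne_of_gt hp0),
        Real.rpow_one]
    rw [key]
    calc (∏ i : Fin m, ‖z i‖ ^ p) ^ (1 / p) ≤ ((1/2 : ℝ) ^ m) ^ (1 / p) :=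
          Real.rpow_le_rpow hpnn hprodp (by positivity)
      _ = (2 : ℝ) ^ (-((m : ℝ) / p)) := by
          rw [← Real.rpow_natCast ((1:ℝ)/2) m, ← Real.rpow_mul (by norm_num)]
          rw [one_div (2:ℝ), Real.inv_rpow (by norm_num), ← Real.rpow_neg (by norm_num)]
          ring_nf
  have hsSup : sSup S ≤ (2 : ℝ) ^ (-((m : ℝ) / p)) := csSup_le hSne hbound
  -- LHS of H equals 1
  have hH := H m P hPhom
  have hLHS : (∑ α ∈ P.support, ‖P.coeff α‖ ^ (p / (p - (m : ℝ)))) ^ ((p - (m : ℝ)) / p)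
      = 1 := by
    rw [hPmono, MvPolynomial.support_monomial, if_neg one_ne_zero]
    simp [MvPolynomial.coeff_monomial, Real.one_rpow]
  rw [hLHS] at hH
  rw [← hS] at hH
  have hCpos : (0:ℝ) < C := lt_of_lt_of_le one_pos hC
  have h1 : (1:ℝ) ≤ C * (2 : ℝ) ^ (-((m : ℝ) / p)) :=
    le_trans hH (mul_le_mul_of_nonneg_left hsSup (le_of_lt hCpos))
  have h2 : (2 : ℝ) ^ (-((m : ℝ) / p)) = ((2 : ℝ) ^ ((m : ℝ) / p))⁻¹ := by
    rw [Real.rpow_neg (by norm_num)]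
  rw [h2, ← div_eq_mul_inv] at h1
  exact (one_le_div (Real.rpow_pos_of_pos two_pos _)).mp h1
end

section
/- The supremum of |z₁² - z₂² + c·z₁z₂| over (z₁,z₂) ∈ ℂ² with max(|z₁|,|z₂|) ≤ 1 equals (4 + c²)^(1/2), for every real c ≥ 0. -/
/-!
Writing `z₁² - z₂² + c z₁ z₂ = z₁ (z₁ + (c/2) z₂) + z₂ ((c/2) z₁ - z₂)`, Cauchy–Schwarz bounds its
squared modulus by `(|z₁|² + |z₂|²)` times `|z₁ + (c/2) z₂|² + |(c/2) z₁ - z₂|²`, and the latter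
equals `(1 + c²/4)(|z₁|² + |z₂|²)` because the real matrix `[[1, c/2], [c/2, -1]]` is a multiple of
an orthogonal one. Hence the modulus is at most `2 √(1 + c²/4) = √(4 + c²)`, attained at `(1, i)`.
-/

open Complex

theorem norm_mul_add_mul_sq_le {R : Type*} [SeminormedRing R] (a b c d : R) :
    ‖a * b + c * d‖ ^ 2 ≤ (‖a‖ ^ 2 + ‖c‖ ^ 2) * (‖b‖ ^ 2 + ‖d‖ ^ 2) := by
  have h : ‖a * b + c * d‖ ≤ ‖a‖ * ‖b‖ + ‖c‖ * ‖d‖ :=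
    (norm_add_le _ _).trans (add_le_add (norm_mul_le _ _) (norm_mul_le _ _))
  calc ‖a * b + c * d‖ ^ 2 ≤ (‖a‖ * ‖b‖ + ‖c‖ * ‖d‖) ^ 2 := by gcongr
    _ ≤ (‖a‖ ^ 2 + ‖c‖ ^ 2) * (‖b‖ ^ 2 + ‖d‖ ^ 2) := by
      nlinarith [sq_nonneg (‖a‖ * ‖d‖ - ‖c‖ * ‖b‖)]

theorem norm_add_smul_sq_add_norm_smul_sub_sq {E : Type*} [NormedAddCommGroup E]
    [InnerProductSpace ℝ E] (t : ℝ) (x y : E) :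
    ‖x + t • y‖ ^ 2 + ‖t • x - y‖ ^ 2 = (1 + t ^ 2) * (‖x‖ ^ 2 + ‖y‖ ^ 2) := by
  rw [norm_add_sq_real, norm_sub_sq_real, norm_smul, norm_smul, real_inner_smul_left,
    real_inner_smul_right, Real.norm_eq_abs, mul_pow, mul_pow, sq_abs]
  ring

theorem norm_sq_sub_sq_add_mul_le (c : ℝ) {z₁ z₂ : ℂ} (h₁ : ‖z₁‖ ≤ 1) (h₂ : ‖z₂‖ ≤ 1) :
    ‖z₁ ^ 2 - z₂ ^ 2 + (c : ℂ) * z₁ * z₂‖ ≤ Real.sqrt (4 + c ^ 2) := by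
  have h_split : z₁ ^ 2 - z₂ ^ 2 + (c : ℂ) * z₁ * z₂ =
      z₁ * (z₁ + (c / 2 : ℝ) • z₂) + z₂ * ((c / 2 : ℝ) • z₁ - z₂) := by
    simp only [Complex.real_smul]
    push_cast
    ring
  have h_sum : ‖z₁‖ ^ 2 + ‖z₂‖ ^ 2 ≤ 2 := by nlinarith [norm_nonneg z₁, norm_nonneg z₂]
  rw [Real.le_sqrt (norm_nonneg _) (by positivity), h_split]
  calc _ ≤ (‖z₁‖ ^ 2 + ‖z₂‖ ^ 2) * (‖z₁ + (c / 2) • z₂‖ ^ 2 + ‖(c / 2) • z₁ - z₂‖ ^ 2) :=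
        norm_mul_add_mul_sq_le _ _ _ _
    _ = (1 + (c / 2) ^ 2) * (‖z₁‖ ^ 2 + ‖z₂‖ ^ 2) ^ 2 := by
        rw [norm_add_smul_sq_add_norm_smul_sub_sq]; ring
    _ ≤ (1 + (c / 2) ^ 2) * 2 ^ 2 := by gcongr
    _ = 4 + c ^ 2 := by ring

theorem norm_one_sq_sub_I_sq_add_mul (c : ℝ) :
    ‖(1 : ℂ) ^ 2 - I ^ 2 + (c : ℂ) * 1 * I‖ = Real.sqrt (4 + c ^ 2) := by
  have h : (1 : ℂ) ^ 2 - I ^ 2 + (c : ℂ) * 1 * I = ⟨2, c⟩ := by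
    apply Complex.ext <;> norm_num
  rw [h, Complex.norm_def, Complex.normSq_mk]
  ring_nf

theorem stmt_8_general (c : ℝ) :
    sSup {y : ℝ | ∃ z₁ z₂ : ℂ, ‖z₁‖ ≤ 1 ∧ ‖z₂‖ ≤ 1 ∧
        y = ‖z₁ ^ 2 - z₂ ^ 2 + (c : ℂ) * z₁ * z₂‖} =
      Real.sqrt (4 + c ^ 2) := by
  refine IsGreatest.csSup_eq ⟨⟨1, I, by simp, by simp, (norm_one_sq_sub_I_sq_add_mul c).symm⟩, ?_⟩
  rintro y ⟨z₁, z₂, h₁, h₂, rfl⟩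
  exact norm_sq_sub_sq_add_mul_le c h₁ h₂

theorem stmt_8 (c : ℝ) (hc : 0 ≤ c) :
    sSup {y : ℝ | ∃ z₁ z₂ : ℂ, ‖z₁‖ ≤ 1 ∧ ‖z₂‖ ≤ 1 ∧
        y = ‖z₁ ^ 2 - z₂ ^ 2 + (c : ℂ) * z₁ * z₂‖} =
      Real.sqrt (4 + c ^ 2) :=
  stmt_8_general c
end

section
/- Let m ≥ 2, p ≥ 2m, and let Q₂(z₁,z₂) = z₁² - z₂² + c z₁z₂ for real c. Define Q_m : ℂ^m → ℂ by Q_m(z₁,…,z_m) = z₃⋯z_m·Q₂(z₁,z₂). Then the sup norm of Q_m over the unit ball of ℓ_p^m(ℂ) satisfies ‖Q_m‖ ≤ 2^(-(m-2)/p)·(4+c²)^(1/2) when m is even. -/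
/-!
Bound the two factors separately. Writing `2 Q₂(a, b) = a (2a + cb) + b (ca - 2b)`, Cauchy–Schwarz
and `‖2a + cb‖² + ‖ca - 2b‖² = (4 + c²)(‖a‖² + ‖b‖²)` give `‖Q₂(a, b)‖ ≤ √(4 + c²)` on the unit
polydisc, which contains the `ℓ_p` ball. For the other factor, AM-GM applied to the `‖z_i‖^p`
bounds `∏_{i ≥ 3} ‖z_i‖^p` by `(1/2)^(m-2)`, since the even number `m - 2` is not `1`.
-/

open Finset

theorem norm_sq_sub_sq_add_mul_mul_le (c : ℝ) (a b : ℂ) :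
    ‖a ^ 2 - b ^ 2 + (c : ℂ) * a * b‖ ≤ √(4 + c ^ 2) / 2 * (‖a‖ ^ 2 + ‖b‖ ^ 2) := by
  set u := 2 * a + c * b
  set v := c * a - 2 * b
  have hsplit : 2 * (a ^ 2 - b ^ 2 + c * a * b) = a * u + b * v := by ring
  have hnorm : ‖u‖ ^ 2 + ‖v‖ ^ 2 = (4 + c ^ 2) * (‖a‖ ^ 2 + ‖b‖ ^ 2) := by
    simp only [u, v, Complex.sq_norm, Complex.normSq_apply, Complex.add_re, Complex.add_im,
      Complex.sub_re, Complex.sub_im, Complex.mul_re, Complex.mul_im, Complex.ofReal_re,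
      Complex.ofReal_im, Complex.re_ofNat, Complex.im_ofNat]
    ring
  have hCS : (‖a‖ * ‖u‖ + ‖b‖ * ‖v‖) ^ 2 ≤ (‖a‖ ^ 2 + ‖b‖ ^ 2) * (‖u‖ ^ 2 + ‖v‖ ^ 2) := by
    nlinarith [sq_nonneg (‖a‖ * ‖v‖ - ‖b‖ * ‖u‖)]
  have htwice : 2 * ‖a ^ 2 - b ^ 2 + c * a * b‖ ≤ √(4 + c ^ 2) * (‖a‖ ^ 2 + ‖b‖ ^ 2) :=
    calc 2 * ‖a ^ 2 - b ^ 2 + c * a * b‖ = ‖a * u + b * v‖ := by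
          rw [← hsplit, norm_mul, Complex.norm_two]
      _ ≤ ‖a‖ * ‖u‖ + ‖b‖ * ‖v‖ := by
          simpa only [norm_mul] using norm_add_le (a * u) (b * v)
      _ ≤ √((4 + c ^ 2) * (‖a‖ ^ 2 + ‖b‖ ^ 2) ^ 2) :=
          Real.le_sqrt_of_sq_le (by rw [hnorm] at hCS; linarith)
      _ = √(4 + c ^ 2) * (‖a‖ ^ 2 + ‖b‖ ^ 2) := by
          rw [Real.sqrt_mul (by positivity), Real.sqrt_sq (by positivity)]
  linarith

theorem norm_sq_sub_sq_add_mul_mul_le_of_norm_le_one (c : ℝ) {a b : ℂ} (ha : ‖a‖ ≤ 1)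
    (hb : ‖b‖ ≤ 1) : ‖a ^ 2 - b ^ 2 + (c : ℂ) * a * b‖ ≤ √(4 + c ^ 2) :=
  calc ‖a ^ 2 - b ^ 2 + (c : ℂ) * a * b‖ ≤ √(4 + c ^ 2) / 2 * (‖a‖ ^ 2 + ‖b‖ ^ 2) :=
        norm_sq_sub_sq_add_mul_mul_le c a b
    _ ≤ √(4 + c ^ 2) / 2 * (1 ^ 2 + 1 ^ 2) := by gcongr
    _ = √(4 + c ^ 2) := by ring

theorem prod_le_half_pow_card {ι : Type*} (s : Finset ι) (x : ι → ℝ) (hs : #s ≠ 1)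
    (hx : ∀ i ∈ s, 0 ≤ x i) (hsum : ∑ i ∈ s, x i ≤ 1) :
    ∏ i ∈ s, x i ≤ (1 / 2) ^ #s := by
  rcases Nat.eq_zero_or_pos #s with hs0 | hpos
  · simp [card_eq_zero.mp hs0]
  have hn : (2 : ℝ) ≤ #s := by exact_mod_cast (by omega : 2 ≤ #s)
  have hweights : ∑ _i ∈ s, 1 / (#s : ℝ) = 1 := by
    rw [sum_const, nsmul_eq_mul]
    field_simp
  have hgeom : ∏ i ∈ s, x i ^ (1 / (#s : ℝ)) ≤ 1 / 2 :=
    calc ∏ i ∈ s, x i ^ (1 / (#s : ℝ)) ≤ ∑ i ∈ s, 1 / (#s : ℝ) * x i :=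
          Real.geom_mean_le_arith_mean_weighted s _ x (fun _ _ => by positivity) hweights hx
      _ = (∑ i ∈ s, x i) / #s := by rw [← mul_sum]; ring
      _ ≤ 1 / 2 := by rw [div_le_iff₀ (by positivity)]; linarith
  calc ∏ i ∈ s, x i = (∏ i ∈ s, x i ^ (1 / (#s : ℝ))) ^ #s := by
        rw [← prod_pow]
        refine prod_congr rfl fun i hi => ?_
        rw [one_div, Real.rpow_inv_natCast_pow (hx i hi) hpos.ne']
    _ ≤ (1 / 2) ^ #s :=
        pow_le_pow_left₀ (prod_nonneg fun i hi => Real.rpow_nonneg (hx i hi) _) hgeom _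

theorem prod_le_two_rpow_of_sum_rpow_le_one {ι : Type*} (s : Finset ι) (x : ι → ℝ) {p : ℝ}
    (hp : 0 < p) (hs : #s ≠ 1) (hx : ∀ i ∈ s, 0 ≤ x i) (hsum : ∑ i ∈ s, x i ^ p ≤ 1) :
    ∏ i ∈ s, x i ≤ 2 ^ (-(#s : ℝ) / p) := by
  have hprod : 0 ≤ ∏ i ∈ s, x i := prod_nonneg hx
  have hpow : (∏ i ∈ s, x i) ^ p ≤ 2 ^ (-(#s : ℝ)) := by
    rw [← Real.finsetProd_rpow s x hx, Real.rpow_neg zero_le_two, Real.rpow_natCast, ← one_div,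
      ← one_div_pow]
    exact prod_le_half_pow_card s _ hs (fun i hi => Real.rpow_nonneg (hx i hi) p) hsum
  calc ∏ i ∈ s, x i = ((∏ i ∈ s, x i) ^ p) ^ p⁻¹ := (Real.rpow_rpow_inv hprod hp.ne').symm
    _ ≤ (2 ^ (-(#s : ℝ))) ^ p⁻¹ := by gcongr
    _ = 2 ^ (-(#s : ℝ) / p) := by rw [← Real.rpow_mul zero_le_two, div_eq_mul_inv]

theorem le_one_of_sum_rpow_le_one {ι : Type*} (s : Finset ι) (x : ι → ℝ) {p : ℝ}
    (hp : 0 < p) (hx : ∀ i ∈ s, 0 ≤ x i) (hsum : ∑ i ∈ s, x i ^ p ≤ 1) {i : ι} (hi : i ∈ s) :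
    x i ≤ 1 := by
  have hle : x i ^ p ≤ 1 ^ p := by
    rw [Real.one_rpow]
    exact (single_le_sum (fun j hj => Real.rpow_nonneg (hx j hj) p) hi).trans hsum
  exact (Real.rpow_le_rpow_iff (hx i hi) zero_le_one hp).mp hle

theorem Fin.card_filter_two_le_val (m : ℕ) : #{i : Fin m | 2 ≤ (i : ℕ)} = m - 2 := by
  have h := card_filter_add_card_filter_not (s := (univ : Finset (Fin m))) (fun i => (i : ℕ) < 2)
  simp only [Fin.card_filter_val_lt, card_univ, Fintype.card_fin, not_lt] at h
  omega

theorem stmt_10 (m : ℕ) (hm : 2 ≤ m) (hme : Even m) (p : ℝ) (hp : 2 * (m : ℝ) ≤ p)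
    (c : ℝ) :
    sSup {y : ℝ | ∃ z : Fin m → ℂ, (∑ i, ‖z i‖ ^ p) ≤ 1 ∧
        y = ‖(∏ i ∈ Finset.univ.filter (fun i : Fin m => 2 ≤ (i : ℕ)), z i) *
              ((z ⟨0, by omega⟩) ^ 2 - (z ⟨1, by omega⟩) ^ 2 +
                (c : ℂ) * z ⟨0, by omega⟩ * z ⟨1, by omega⟩)‖} ≤
      (2 : ℝ) ^ (-((m : ℝ) - 2) / p) * Real.sqrt (4 + c ^ 2) := by
  have hp0 : 0 < p := by
    have : (2 : ℝ) ≤ m := by exact_mod_cast hm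
    linarith
  refine Real.sSup_le ?_ (by positivity)
  rintro y ⟨z, hz, rfl⟩
  have hnorm_le_one (i : Fin m) : ‖z i‖ ≤ 1 :=
    le_one_of_sum_rpow_le_one univ _ hp0 (fun _ _ => norm_nonneg _) hz (mem_univ i)
  have hcard : #{i : Fin m | 2 ≤ (i : ℕ)} ≠ 1 := by
    obtain ⟨r, rfl⟩ := hme
    rw [Fin.card_filter_two_le_val]
    omega
  have hprod : ∏ i ∈ univ.filter (fun i : Fin m => 2 ≤ (i : ℕ)), ‖z i‖ ≤
      2 ^ (-((m : ℝ) - 2) / p) := by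
    have := prod_le_two_rpow_of_sum_rpow_le_one _ (‖z ·‖) hp0 hcard (fun _ _ => norm_nonneg _)
      ((sum_le_sum_of_subset_of_nonneg (subset_univ _) fun _ _ _ => by positivity).trans hz)
    rwa [Fin.card_filter_two_le_val, Nat.cast_sub hm, Nat.cast_two] at this
  have hQ := norm_sq_sub_sq_add_mul_mul_le_of_norm_le_one c (hnorm_le_one ⟨0, by omega⟩)
    (hnorm_le_one ⟨1, by omega⟩)
  rw [norm_mul, norm_prod]
  exact mul_le_mul hprod hQ (norm_nonneg _) (by positivity)
end

section
/- Let m ≥ 4 be even and p ≥ 2m. For every ε > 0, any constant C ≥ 1 satisfying the complex m-homogeneous Hardy–Littlewood inequality on ℓ_p (with exponent 2mp/(mp+p-2m)) satisfies C ≥ (2 + c^q)^(1/q) / (2^(-(m-2)/p)(4+c²)^(1/2)) > 1, where q = 2mp/(mp+p-2m) and c = ((2^((2p+4-2m)/p) - 2^((mp+p-2m)/(mp)))/(1 - 2^(-(2m-4)/p)))^(1/2) + ε. -/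
/-!
Test the inequality on `Q = z₃⋯z_m (z₁² - z₂² + c z₁z₂)`, whose coefficients have `ℓ_q`-sum
`2 + c^q`. On the unit ball of `ℓ_p`, AM-GM bounds `|z₃⋯z_m|` by `2^(-(m-2)/p)`, and the
quadratic form `z₁² - z₂² + c z₁z₂` has norm `√(1 + c²/4)`, so `|Q| ≤ 2^(-(m-2)/p) √(4 + c²)`.
The resulting lower bound for `C` exceeds `1`: with `a = 2^(-(m-2)/p)`, superadditivity of
`t ↦ t^(2/q)` (as `q ≤ 2`) gives `(2 + c^q)^(2/q) ≥ 2^(2/q) + c²`, and `c` is chosen with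
`c² > (4a² - 2^(2/q)) / (1 - a²)`, which is exactly `a²(4 + c²) < 2^(2/q) + c²`.
-/

open MvPolynomial

/-- The exponent of `z₀^a z₁^b z₂⋯z_{k+1}`; the paper's `Q_m` is `testPoly (m - 2) c`. -/
noncomputable def testExponent (k a b : ℕ) : Fin (k + 2) →₀ ℕ :=
  Finsupp.equivFunOnFinite.symm (Fin.cons a (Fin.cons b 1))

noncomputable def testPoly (k : ℕ) (c : ℝ) : MvPolynomial (Fin (k + 2)) ℂ :=
  monomial (testExponent k 2 0) 1 - monomial (testExponent k 0 2) 1 +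
    monomial (testExponent k 1 1) (c : ℂ)

@[simp] lemma testExponent_zero (k a b : ℕ) : testExponent k a b 0 = a := rfl
@[simp] lemma testExponent_one (k a b : ℕ) : testExponent k a b 1 = b := rfl
@[simp] lemma testExponent_succ_succ (k a b : ℕ) (i : Fin k) :
    testExponent k a b i.succ.succ = 1 := rfl

lemma degree_testExponent (k a b : ℕ) : (testExponent k a b).degree = a + b + k := by
  simp [Finsupp.degree_eq_sum, Fin.sum_univ_succ, add_assoc]

lemma eval_monomial_testExponent (k a b : ℕ) (r : ℂ) (z : Fin (k + 2) → ℂ) :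
    eval z (monomial (testExponent k a b) r) =
      r * z 0 ^ a * z 1 ^ b * ∏ i : Fin k, z i.succ.succ := by
  simp [eval_monomial, Finsupp.prod_pow, Fin.prod_univ_succ, mul_assoc]

lemma eval_testPoly (k : ℕ) (c : ℝ) (z : Fin (k + 2) → ℂ) :
    eval z (testPoly k c) =
      (z 0 ^ 2 - z 1 ^ 2 + c * z 0 * z 1) * ∏ i : Fin k, z i.succ.succ := by
  simp only [testPoly, map_add, map_sub, eval_monomial_testExponent]
  ring

lemma isHomogeneous_testPoly (k : ℕ) (c : ℝ) : (testPoly k c).IsHomogeneous (k + 2) := by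
  refine ((isHomogeneous_monomial _ ?_).sub (isHomogeneous_monomial _ ?_)).add
    (isHomogeneous_monomial _ ?_) <;> simp only [degree_testExponent] <;> ring

lemma testExponent_inj {k a b a' b' : ℕ} :
    testExponent k a b = testExponent k a' b' ↔ a = a' ∧ b = b' :=
  ⟨fun h => ⟨congr($h 0), congr($h 1)⟩, fun ⟨ha, hb⟩ => ha ▸ hb ▸ rfl⟩

lemma sum_norm_rpow_coeff_testPoly (k : ℕ) (c : ℝ) {q : ℝ} (hq : q ≠ 0) :
    ∑ α ∈ (testPoly k c).support, ‖(testPoly k c).coeff α‖ ^ q = 2 + |c| ^ q := by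
  classical
  have hsupp : (testPoly k c).support ⊆
      {testExponent k 2 0, testExponent k 0 2, testExponent k 1 1} := by
    intro α hα
    contrapose! hα
    simp only [Finset.mem_insert, Finset.mem_singleton, not_or] at hα
    obtain ⟨h₁, h₂, h₃⟩ := hα
    simp [testPoly, coeff_monomial, Ne.symm h₁, Ne.symm h₂, Ne.symm h₃]
  rw [Finset.sum_subset hsupp fun α _ hα => by
    simp [notMem_support_iff.mp hα, Real.zero_rpow hq]]
  rw [Finset.sum_insert (by simp [testExponent_inj]),
    Finset.sum_insert (by simp [testExponent_inj]), Finset.sum_singleton]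
  norm_num [testPoly, coeff_monomial, testExponent_inj, ← add_assoc, one_add_one_eq_two]

lemma norm_sq_sub_sq_add_mul_sq_le (c : ℝ) (a b : ℂ) :
    4 * ‖a ^ 2 - b ^ 2 + c * a * b‖ ^ 2 ≤ (4 + c ^ 2) * (‖a‖ ^ 2 + ‖b‖ ^ 2) ^ 2 := by
  -- `(a, b) ↦ a² - b² + c a b` is the complex quadratic form of `[[1, c/2], [c/2, -1]]`,
  -- whose eigenvalues are `±√(1 + c²/4)`; this identity makes that explicit.
  have hid : 4 * Complex.normSq (a ^ 2 - b ^ 2 + c * a * b) +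
      (4 * (a * (starRingEnd ℂ) b).re - c * (Complex.normSq a - Complex.normSq b)) ^ 2 =
      (4 + c ^ 2) * (Complex.normSq a + Complex.normSq b) ^ 2 := by
    simp only [Complex.normSq_apply, Complex.add_re, Complex.add_im, Complex.sub_re,
      Complex.sub_im, Complex.mul_re, Complex.mul_im, Complex.ofReal_re, Complex.ofReal_im,
      Complex.conj_re, Complex.conj_im, pow_two]
    ring
  simp only [Complex.sq_norm]
  nlinarith [hid,
    sq_nonneg (4 * (a * (starRingEnd ℂ) b).re - c * (Complex.normSq a - Complex.normSq b))]

lemma norm_sq_sub_sq_add_mul_le_sqrt (c : ℝ) {a b : ℂ} (ha : ‖a‖ ≤ 1) (hb : ‖b‖ ≤ 1) :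
    ‖a ^ 2 - b ^ 2 + c * a * b‖ ≤ √(4 + c ^ 2) := by
  have hab : (‖a‖ ^ 2 + ‖b‖ ^ 2) ^ 2 ≤ 4 := by
    have : ‖a‖ ^ 2 + ‖b‖ ^ 2 ≤ 2 := by nlinarith [norm_nonneg a, norm_nonneg b]
    nlinarith [norm_nonneg a, norm_nonneg b]
  rw [Real.le_sqrt (norm_nonneg _) (by positivity)]
  nlinarith [norm_sq_sub_sq_add_mul_sq_le c a b,
    mul_le_mul_of_nonneg_left hab (by positivity : (0 : ℝ) ≤ 4 + c ^ 2)]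

lemma prod_le_card_rpow_of_sum_rpow_le_one {ι : Type*} [Fintype ι] [Nonempty ι] {p : ℝ}
    (hp : 0 < p) {x : ι → ℝ} (hx : ∀ i, 0 ≤ x i) (hsum : ∑ i, x i ^ p ≤ 1) :
    ∏ i, x i ≤ (Fintype.card ι : ℝ) ^ (-(Fintype.card ι : ℝ) / p) := by
  set n : ℝ := (Fintype.card ι : ℝ)
  have hn : 0 < n := by positivity
  have hprod : 0 ≤ ∏ i, x i := Finset.prod_nonneg fun i _ => hx i
  have amgm := Real.geom_mean_le_arith_mean Finset.univ (fun _ => 1) (fun i => x i ^ p)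
    (fun _ _ => zero_le_one) (by simpa using Fintype.card_pos)
    (fun i _ => Real.rpow_nonneg (hx i) p)
  simp only [Real.rpow_one, one_mul, Finset.sum_const, Finset.card_univ, nsmul_eq_mul,
    mul_one] at amgm
  rw [Real.finsetProd_rpow _ _ (fun i _ => hx i), ← Real.rpow_mul hprod] at amgm
  have key : (∏ i, x i) ^ (p * n⁻¹) ≤ n⁻¹ :=
    amgm.trans (by rw [div_eq_mul_inv]; exact mul_le_of_le_one_left (by positivity) hsum)
  calc ∏ i, x i ≤ (n⁻¹) ^ (p * n⁻¹)⁻¹ :=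
        (Real.le_rpow_inv_iff_of_pos hprod (by positivity) (by positivity)).mpr key
    _ = n ^ (-n / p) := by
        rw [Real.inv_rpow hn.le, ← Real.rpow_neg hn.le]; congr 1; field_simp

lemma norm_eval_testPoly_le (c : ℝ) {k : ℕ} (hk : 2 ≤ k) {p : ℝ} (hp : 0 < p)
    {z : Fin (k + 2) → ℂ} (hz : ∑ i, ‖z i‖ ^ p ≤ 1) :
    ‖eval z (testPoly k c)‖ ≤ (2 : ℝ) ^ (-(k / p)) * √(4 + c ^ 2) := by
  have hle : ∀ i, ‖z i‖ ≤ 1 := fun i => by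
    rw [← Real.rpow_le_rpow_iff (norm_nonneg _) zero_le_one hp, Real.one_rpow]
    exact (Finset.single_le_sum (fun j _ => Real.rpow_nonneg (norm_nonneg (z j)) p)
      (Finset.mem_univ i)).trans hz
  rw [Fin.sum_univ_succ, Fin.sum_univ_succ] at hz
  have htail : ∑ i : Fin k, ‖z i.succ.succ‖ ^ p ≤ 1 := by
    have := Real.rpow_nonneg (norm_nonneg (z 0)) p
    have := Real.rpow_nonneg (norm_nonneg (z (Fin.succ 0))) p
    linarith
  have : Nonempty (Fin k) := ⟨⟨0, by omega⟩⟩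
  have hprod : ∏ i : Fin k, ‖z i.succ.succ‖ ≤ (2 : ℝ) ^ (-(k / p)) := by
    refine (prod_le_card_rpow_of_sum_rpow_le_one hp (fun i => norm_nonneg _) htail).trans ?_
    rw [Fintype.card_fin, neg_div]
    exact Real.rpow_le_rpow_of_nonpos two_pos (by exact_mod_cast hk)
      (neg_nonpos.2 (by positivity))
  rw [eval_testPoly, norm_mul, norm_prod, mul_comm]
  exact mul_le_mul hprod (norm_sq_sub_sq_add_mul_le_sqrt c (hle 0) (hle 1))
    (norm_nonneg _) (by positivity)

lemma two_rpow_neg_mul_sqrt_lt {q s c : ℝ} (hq : 0 < q) (hq2 : q ≤ 2) (hs : 0 < s)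
    (hc : √((2 ^ (2 - 2 * s) - 2 ^ (2 / q)) / (1 - 2 ^ (-2 * s))) < c) :
    (2 : ℝ) ^ (-s) * √(4 + c ^ 2) < (2 + c ^ q) ^ (1 / q) := by
  have hc0 : 0 < c := (Real.sqrt_nonneg _).trans_lt hc
  set a : ℝ := 2 ^ (-s)
  have ha2 : (2 : ℝ) ^ (-2 * s) = a ^ 2 := by
    rw [← Real.rpow_mul_natCast zero_le_two]; ring_nf
  have h4a : (2 : ℝ) ^ (2 - 2 * s) = 4 * a ^ 2 := by
    rw [sub_eq_add_neg, Real.rpow_add two_pos, neg_mul_eq_neg_mul, ha2]; norm_num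
  have ha1 : a ^ 2 < 1 := by
    rw [← ha2]; exact Real.rpow_lt_one_of_one_lt_of_neg one_lt_two (by linarith)
  rw [h4a, ha2, Real.sqrt_lt' hc0, div_lt_iff₀ (sub_pos.2 ha1)] at hc
  have hsuper : (2 : ℝ) ^ (2 / q) + c ^ 2 ≤ (2 + c ^ q) ^ (2 / q) := by
    have h := Real.add_rpow_le_rpow_add zero_le_two (Real.rpow_nonneg hc0.le q)
      ((one_le_div hq).2 hq2)
    rwa [← Real.rpow_mul hc0.le, mul_div_cancel₀ _ hq.ne', Real.rpow_two] at h
  have hbase : 0 ≤ 2 + c ^ q := by positivity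
  refine lt_of_pow_lt_pow_left₀ 2 (Real.rpow_nonneg hbase _) ?_
  rw [mul_pow, Real.sq_sqrt (by positivity), ← Real.rpow_mul_natCast hbase]
  calc a ^ 2 * (4 + c ^ 2) < 2 ^ (2 / q) + c ^ 2 := by nlinarith
    _ ≤ (2 + c ^ q) ^ (2 / q) := hsuper
    _ = (2 + c ^ q) ^ (1 / q * (2 : ℕ)) := by ring_nf

theorem stmt_14_general (m : ℕ) (hm : 4 ≤ m) (p : ℝ) (hp : 2 * (m : ℝ) ≤ p)
    (ε : ℝ) (hε : 0 < ε) (q c : ℝ)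
    (hq : q = 2 * (m : ℝ) * p / ((m : ℝ) * p + p - 2 * (m : ℝ)))
    (hc : c = (((2 : ℝ) ^ ((2 * p + 4 - 2 * (m : ℝ)) / p) -
          (2 : ℝ) ^ (((m : ℝ) * p + p - 2 * (m : ℝ)) / ((m : ℝ) * p))) /
        (1 - (2 : ℝ) ^ (-(2 * (m : ℝ) - 4) / p))) ^ ((1 : ℝ) / 2) + ε)
    (C : ℝ) (hC : 1 ≤ C)
    (H : ∀ (n : ℕ) (P : MvPolynomial (Fin n) ℂ), P.IsHomogeneous m →
      (∑ α ∈ P.support, ‖P.coeff α‖ ^ q) ^ (1 / q) ≤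
        C * sSup {y : ℝ | ∃ z : Fin n → ℂ, (∑ i, ‖z i‖ ^ p) ≤ 1 ∧
              y = ‖MvPolynomial.eval z P‖}) :
    (2 + c ^ q) ^ (1 / q) / ((2 : ℝ) ^ (-((m : ℝ) - 2) / p) * Real.sqrt (4 + c ^ 2)) ≤ C ∧
    1 < (2 + c ^ q) ^ (1 / q) / ((2 : ℝ) ^ (-((m : ℝ) - 2) / p) * Real.sqrt (4 + c ^ 2)) := by
  obtain ⟨k, rfl⟩ : ∃ k, m = k + 2 := ⟨m - 2, by omega⟩
  have hk : 2 ≤ k := by omega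
  push_cast at hp hq hc ⊢
  have hp0 : 0 < p := by linarith
  have hD : 0 < (k + 2) * p + p - 2 * (k + 2) := by nlinarith
  have hq0 : 0 < q := by rw [hq]; positivity
  have hq2 : q ≤ 2 := by rw [hq, div_le_iff₀ hD]; nlinarith
  have hcT : √((2 ^ (2 - 2 * (k / p)) - 2 ^ (2 / q)) / (1 - 2 ^ (-2 * (k / p)))) < c := by
    have e₁ : (2 * p + 4 - 2 * (k + 2)) / p = 2 - 2 * (k / p) := by field_simp; ring
    have e₂ : ((k + 2) * p + p - 2 * (k + 2)) / ((k + 2) * p) = 2 / q := by rw [hq]; field_simp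
    have e₃ : -(2 * (k + 2) - 4) / p = -2 * (k / p) := by ring
    rw [hc, e₁, e₂, e₃, Real.sqrt_eq_rpow]
    linarith
  have hc0 : 0 < c := (Real.sqrt_nonneg _).trans_lt hcT
  have hsup : sSup {y : ℝ | ∃ z : Fin (k + 2) → ℂ, ∑ i, ‖z i‖ ^ p ≤ 1 ∧
      y = ‖eval z (testPoly k c)‖} ≤ (2 : ℝ) ^ (-(k / p)) * √(4 + c ^ 2) :=
    Real.sSup_le (by rintro _ ⟨z, hz, rfl⟩; exact norm_eval_testPoly_le c hk hp0 hz)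
      (by positivity)
  have hcoeff := sum_norm_rpow_coeff_testPoly k c hq0.ne'
  rw [abs_of_pos hc0] at hcoeff
  have hlt := two_rpow_neg_mul_sqrt_lt hq0 hq2 (by positivity) hcT
  rw [show -((k : ℝ) + 2 - 2) / p = -(k / p) by ring]
  constructor
  · rw [div_le_iff₀ (by positivity)]
    calc (2 + c ^ q) ^ (1 / q) ≤ C * sSup _ :=
          hcoeff ▸ H (k + 2) (testPoly k c) (isHomogeneous_testPoly k c)
      _ ≤ C * ((2 : ℝ) ^ (-(k / p)) * √(4 + c ^ 2)) :=
          mul_le_mul_of_nonneg_left hsup (by linarith)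
  · rwa [one_lt_div (by positivity)]

theorem stmt_14 (m : ℕ) (hm : 4 ≤ m) (hme : Even m) (p : ℝ) (hp : 2 * (m : ℝ) ≤ p)
    (ε : ℝ) (hε : 0 < ε) (q c : ℝ)
    (hq : q = 2 * (m : ℝ) * p / ((m : ℝ) * p + p - 2 * (m : ℝ)))
    (hc : c = (((2 : ℝ) ^ ((2 * p + 4 - 2 * (m : ℝ)) / p) -
          (2 : ℝ) ^ (((m : ℝ) * p + p - 2 * (m : ℝ)) / ((m : ℝ) * p))) /
        (1 - (2 : ℝ) ^ (-(2 * (m : ℝ) - 4) / p))) ^ ((1 : ℝ) / 2) + ε)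
    (C : ℝ) (hC : 1 ≤ C)
    (H : ∀ (n : ℕ) (P : MvPolynomial (Fin n) ℂ), P.IsHomogeneous m →
      (∑ α ∈ P.support, ‖P.coeff α‖ ^ q) ^ (1 / q) ≤
        C * sSup {y : ℝ | ∃ z : Fin n → ℂ, (∑ i, ‖z i‖ ^ p) ≤ 1 ∧
              y = ‖MvPolynomial.eval z P‖}) :
    (2 + c ^ q) ^ (1 / q) / ((2 : ℝ) ^ (-((m : ℝ) - 2) / p) * Real.sqrt (4 + c ^ 2)) ≤ C ∧
    1 < (2 + c ^ q) ^ (1 / q) / ((2 : ℝ) ^ (-((m : ℝ) - 2) / p) * Real.sqrt (4 + c ^ 2)) :=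
  stmt_14_general m hm p hp ε hε q c hq hc C hC H
end

section
/- For p = 4 and m = 2, any constant C satisfying the complex 2-homogeneous Hardy–Littlewood inequality on ℓ_4 (with exponent 2mp/(mp+p-2m) = 16/(8+4-4) = 2) satisfies C ≥ √2. -/
theorem stmt_16 (C : ℝ)
    (H : ∀ (n : ℕ) (P : MvPolynomial (Fin n) ℂ), P.IsHomogeneous 2 →
      (∑ α ∈ P.support, ‖P.coeff α‖ ^ 2) ^ ((1 : ℝ) / 2) ≤
        C * sSup {y : ℝ | ∃ z : Fin n → ℂ, (∑ i, ‖z i‖ ^ (4 : ℝ)) ≤ 1 ∧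
              y = ‖MvPolynomial.eval z P‖}) :
    Real.sqrt 2 ≤ C := by
  classical
  set P : MvPolynomial (Fin 2) ℂ := MvPolynomial.X 0 * MvPolynomial.X 1 with hP
  have hhom : P.IsHomogeneous 2 :=
    (MvPolynomial.isHomogeneous_X _ _).mul (MvPolynomial.isHomogeneous_X _ _)
  set α₀ : Fin 2 →₀ ℕ := Finsupp.single 0 1 + Finsupp.single 1 1 with hα₀
  have hPm : P = MvPolynomial.monomial α₀ (1 : ℂ) := by
    rw [hP, hα₀, MvPolynomial.X, MvPolynomial.X, MvPolynomial.monomial_mul, one_mul]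
  have hcoeff : P.coeff α₀ = 1 := by
    rw [hPm, MvPolynomial.coeff_monomial, if_pos rfl]
  have hmem : α₀ ∈ P.support := by
    rw [MvPolynomial.mem_support_iff, hcoeff]; exact one_ne_zero
  -- evaluation
  have heval : ∀ z : Fin 2 → ℂ, MvPolynomial.eval z P = z 0 * z 1 := by
    intro z; simp [hP]
  set S : Set ℝ := {y : ℝ | ∃ z : Fin 2 → ℂ, (∑ i, ‖z i‖ ^ (4 : ℝ)) ≤ 1 ∧
      y = ‖MvPolynomial.eval z P‖} with hS
  have hsq2 : Real.sqrt (1/2) * Real.sqrt 2 = 1 := by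
    rw [← Real.sqrt_mul (by norm_num : (0:ℝ) ≤ 1/2)]
    norm_num
  -- upper bound for S
  have hub : ∀ y ∈ S, y ≤ Real.sqrt (1/2) := by
    rintro y ⟨z, hz, rfl⟩
    rw [heval, norm_mul]
    set a := ‖z 0‖
    set b := ‖z 1‖
    have ha : 0 ≤ a := norm_nonneg _
    have hb : 0 ≤ b := norm_nonneg _
    have hz' : a ^ (4:ℕ) + b ^ (4:ℕ) ≤ 1 := by
      have := hz
      rw [Fin.sum_univ_two] at this
      rw [← Real.rpow_natCast a 4, ← Real.rpow_natCast b 4]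
      push_cast
      convert this using 2
    have hsq : (a * b) ^ 2 ≤ 1/2 := by nlinarith [sq_nonneg (a^2 - b^2)]
    have := Real.sqrt_le_sqrt hsq
    rwa [Real.sqrt_sq (mul_nonneg ha hb)] at this
  -- membership of √(1/2)
  have hmem2 : Real.sqrt (1/2) ∈ S := by
    have hn : ‖(((1/2 : ℝ) ^ ((1:ℝ)/4) : ℝ) : ℂ)‖ = (1/2 : ℝ) ^ ((1:ℝ)/4) := by
      rw [Complex.norm_real, Real.norm_eq_abs,
        abs_of_nonneg (Real.rpow_nonneg (by norm_num) _)]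
    refine ⟨fun _ => (((1/2 : ℝ) ^ ((1:ℝ)/4) : ℝ) : ℂ), ?_, ?_⟩
    · rw [Fin.sum_univ_two, hn, ← Real.rpow_mul (by norm_num : (0:ℝ) ≤ 1/2)]
      norm_num
    · rw [heval, norm_mul, hn, ← Real.rpow_add (by norm_num : (0:ℝ) < 1/2),
        Real.sqrt_eq_rpow]
      norm_num
  have hbdd : BddAbove S := ⟨Real.sqrt (1/2), hub⟩
  have hsup : sSup S = Real.sqrt (1/2) :=
    le_antisymm (csSup_le ⟨_, hmem2⟩ hub) (le_csSup hbdd hmem2)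
  -- lower bound on the coefficient sum
  have hsum : (1:ℝ) ≤ ∑ α ∈ P.support, ‖P.coeff α‖ ^ 2 := by
    have := Finset.single_le_sum (f := fun α => ‖P.coeff α‖ ^ 2)
      (fun i _ => sq_nonneg _) hmem
    simpa [hcoeff] using this
  have hlhs : (1:ℝ) ≤ (∑ α ∈ P.support, ‖P.coeff α‖ ^ 2) ^ ((1:ℝ)/2) := by
    calc (1:ℝ) = (1:ℝ) ^ ((1:ℝ)/2) := (Real.one_rpow _).symm
    _ ≤ _ := Real.rpow_le_rpow (by norm_num) hsum (by norm_num)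
  have hH := H 2 P hhom
  rw [← hS, hsup] at hH
  have h1 : (1:ℝ) ≤ C * Real.sqrt (1/2) := le_trans hlhs hH
  nlinarith [Real.sqrt_nonneg (2:ℝ), Real.sqrt_nonneg (1/2 : ℝ)]
end
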